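/- Let D be a strongly connected digraph on n vertices, not a directed cycle, such that for every pair of non-adjacent vertices x, y that have a common out-neighbour or a common in-neighbour, one has min{d⁺(x)+d⁻(y), d⁻(x)+d⁺(y)} ≥ n−1 and d(x)+d(y) ≥ 2n−1. Suppose D contains no cycle of length n−1 and no cycle of length n−2, let C := x₁x₂…x_m x₁ be a longest non-Hamiltonian cycle of D, and suppose P := u₁u₂…u_s is a C-bypass with u₁ = x₁, u_s = x₂ of minimum possible gap (namely gap 1) and minimal length among such bypasses, whose internal vertices comprise all of R := V(D) − V(C). Then s ≥ 5, and moreover x₁u_{s−1} ∉ A(D), u₂x₂ ∉ A(D), neither x_{m−1}u₂ nor x_m u₂ is an arc of D, and neither u_{s−1}x₃ nor u_{s−1}x₄ is an arc of D. -/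

import Mathlib

variable {V : Type*}

/-- Rotate an index of `Fin m` forward by `k` steps (indices mod `m`). -/
def finRot {m : ℕ} (i : Fin m) (k : ℕ) : Fin m :=
  ⟨(i.val + k) % m, Nat.mod_lt _ (Nat.lt_of_le_of_lt (Nat.zero_le i.val) i.isLt)⟩

/-- `c : Fin k → V` is a directed cycle of length `k`: distinct vertices with an
arc from each vertex to the next one (cyclically). -/
def IsCycle (A : V → V → Prop) {k : ℕ} (c : Fin k → V) : Prop :=
  Function.Injective c ∧ ∀ i, A (c i) (c (finRot i 1))

/-- Out-degree of `x`. -/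
def outDeg [Fintype V] (A : V → V → Prop) [DecidableRel A] (x : V) : ℕ :=
  (Finset.univ.filter fun y => A x y).card

/-- In-degree of `x`. -/
def inDeg [Fintype V] (A : V → V → Prop) [DecidableRel A] (x : V) : ℕ :=
  (Finset.univ.filter fun y => A y x).card

/-- Degree of `x`. -/
def deg [Fintype V] (A : V → V → Prop) [DecidableRel A] (x : V) : ℕ :=
  outDeg A x + inDeg A x

/-- Out-degree of `x` into the set `S`. -/
def outDegOn (A : V → V → Prop) [DecidableRel A] (x : V) (S : Finset V) : ℕ :=
  (S.filter fun y => A x y).card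

/-- In-degree of `x` from the set `S`. -/
def inDegOn (A : V → V → Prop) [DecidableRel A] (x : V) (S : Finset V) : ℕ :=
  (S.filter fun y => A y x).card

/-- Degree of `x` with respect to the set `S`. -/
def degOn (A : V → V → Prop) [DecidableRel A] (x : V) (S : Finset V) : ℕ :=
  outDegOn A x S + inDegOn A x S

/-- The set of indices of the subpath of a cycle on `Fin m` that goes from
index `β` to index `α` (inclusive), following the orientation of the cycle. -/
def cycSeg {m : ℕ} (β α : Fin m) : Finset (Fin m) :=
  (Finset.range ((α.val + m - β.val) % m + 1)).image (finRot β)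

/-! Counting `R` twice gives `s - 2 = n - m ≥ 3`. An arc `x₁u_{s-1}` or `u₂x₂` would give a
bypass `x₁ w x₂` of gap 1 and length 2, shorter than `P`. Each of the four remaining arcs
closes, with the path `u₂ … u_{s-1}` and the part of `C` that avoids one or two vertices of `C`,
a cycle through all but one or two vertices of `D`, i.e. of length `n - 1` or `n - 2`. -/

lemma finRot_finRot {m : ℕ} (i : Fin m) (a b : ℕ) :
    finRot (finRot i a) b = finRot i (a + b) :=
  Fin.ext (by simp only [finRot, Nat.mod_add_mod, Nat.add_assoc])

lemma finRot_zero {m : ℕ} (i : Fin m) : finRot i 0 = i :=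
  Fin.ext (Nat.mod_eq_of_lt i.isLt)

lemma finRot_self {m : ℕ} (i : Fin m) : finRot i m = i :=
  Fin.ext (by simp [finRot, Nat.mod_eq_of_lt i.isLt])

lemma finRot_inj_of_lt {m : ℕ} (i : Fin m) {a b : ℕ} (ha : a < m) (hb : b < m)
    (h : finRot i a = finRot i b) : a = b := by
  have hab : a ≡ b [MOD m] := Nat.ModEq.add_left_cancel' i.val (congrArg Fin.val h)
  rwa [Nat.ModEq, Nat.mod_eq_of_lt ha, Nat.mod_eq_of_lt hb] at hab

lemma finRot_one_ne {m : ℕ} (hm : 2 ≤ m) (i : Fin m) : finRot i 1 ≠ i := by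
  simpa [finRot_zero] using mt (finRot_inj_of_lt i (a := 1) (b := 0) (by omega) (by omega))

def FollowsArcs (A : V → V → Prop) {k : ℕ} (p : Fin k → V) : Prop :=
  ∀ i j : Fin k, (j : ℕ) = i + 1 → A (p i) (p j)

def pathInterior {s : ℕ} (u : Fin s → V) : Fin (s - 2) → V :=
  fun i => u ⟨i + 1, by omega⟩

section

variable {A : V → V → Prop}

lemma pathInterior_last {s : ℕ} (u : Fin s → V) (hs : 3 ≤ s) :
    pathInterior u ⟨s - 3, by omega⟩ = u ⟨s - 2, by omega⟩ :=
  congrArg u (Fin.ext (by simp only; omega))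

lemma exists_pathInterior_eq_iff {s : ℕ} (u : Fin s → V) (v : V) :
    (∃ i, pathInterior u i = v) ↔
      ∃ t : Fin s, 0 < (t : ℕ) ∧ (t : ℕ) < s - 1 ∧ u t = v := by
  constructor
  · rintro ⟨i, rfl⟩
    exact ⟨_, Nat.succ_pos _, by have := i.isLt; simp only; omega, rfl⟩
  · rintro ⟨t, h0, h1, rfl⟩
    exact ⟨⟨t - 1, by omega⟩, congrArg u (Fin.ext (by simp only; omega))⟩

lemma pathInterior_injective {s : ℕ} {u : Fin s → V} (hu : Function.Injective u) :
    Function.Injective (pathInterior u) := fun i j h =>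
  Fin.ext (by simpa using congrArg Fin.val (hu h))

lemma followsArcs_pathInterior {s : ℕ} {u : Fin s → V} (hu : FollowsArcs A u) :
    FollowsArcs A (pathInterior u) :=
  fun i j hij => hu _ _ (by simp only [hij])

lemma IsCycle.followsArcs_finRot {m : ℕ} {c : Fin m → V} (hc : IsCycle A c) (α : Fin m)
    (ℓ : ℕ) : FollowsArcs A (fun i : Fin ℓ => c (finRot α i)) := by
  intro i j hij
  simpa only [hij, finRot_finRot] using hc.2 (finRot α i)

lemma FollowsArcs.append {a b : ℕ} {p : Fin a → V} {q : Fin b → V}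
    (hp : FollowsArcs A p) (hq : FollowsArcs A q) (ha : 0 < a) (hb : 0 < b)
    (hpq : A (p ⟨a - 1, by omega⟩) (q ⟨0, hb⟩)) : FollowsArcs A (Fin.append p q) := by
  intro i j hij
  induction i using Fin.addCases with
  | left i =>
    induction j using Fin.addCases with
    | left j => simpa using hp i j (by simpa using hij)
    | right j =>
      simp only [Fin.val_castAdd, Fin.val_natAdd] at hij
      simp only [Fin.append_left, Fin.append_right]
      convert hpq using 2 <;> ext <;> simp only <;> omega
  | right i =>
    induction j using Fin.addCases with
    | left j => simp only [Fin.val_castAdd, Fin.val_natAdd] at hij; omega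
    | right j =>
      simp only [Fin.val_natAdd] at hij
      simpa using hq i j (by omega)

lemma IsCycle.of_followsArcs {k : ℕ} {d : Fin k → V} (hk : 0 < k)
    (hinj : Function.Injective d) (hd : FollowsArcs A d)
    (hclose : A (d ⟨k - 1, by omega⟩) (d ⟨0, hk⟩)) : IsCycle A d := by
  refine ⟨hinj, fun i => ?_⟩
  by_cases hi : (i : ℕ) + 1 = k
  · convert hclose using 2 <;> ext <;> simp [finRot, hi]; omega
  · exact hd _ _ (Nat.mod_eq_of_lt (by omega))

/-- The cycle `c α, c (α + 1), …, c (α + ℓ - 1), q 0, …, q (b - 1)`. -/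
theorem IsCycle.exists_isCycle_splice {m b : ℕ} {c : Fin m → V} (hc : IsCycle A c)
    {q : Fin b → V} (hq : Function.Injective q) (hqarcs : FollowsArcs A q) (hb : 0 < b)
    (hdisj : ∀ i j, c i ≠ q j) (α : Fin m) {ℓ : ℕ} (hℓ : 0 < ℓ) (hℓm : ℓ ≤ m)
    (hin : A (c (finRot α (ℓ - 1))) (q ⟨0, hb⟩)) (hout : A (q ⟨b - 1, by omega⟩) (c α)) :
    ∃ d : Fin (ℓ + b) → V, IsCycle A d := by
  let p : Fin ℓ → V := fun i => c (finRot α i)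
  have hp : Function.Injective p := fun i j h =>
    Fin.ext (finRot_inj_of_lt α (by omega) (by omega) (hc.1 h))
  refine ⟨Fin.append p q, IsCycle.of_followsArcs (by omega)
    (Fin.append_injective_iff.2 ⟨hp, hq, fun i j => hdisj _ j⟩)
    ((hc.followsArcs_finRot α ℓ).append hqarcs hℓ hb hin) ?_⟩
  have hlast : (⟨ℓ + b - 1, by omega⟩ : Fin (ℓ + b)) = Fin.natAdd ℓ ⟨b - 1, by omega⟩ :=
    Fin.ext (by simp only [Fin.val_natAdd]; omega)
  have hfirst : (⟨0, by omega⟩ : Fin (ℓ + b)) = Fin.castAdd b ⟨0, hℓ⟩ := rfl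
  rw [hlast, hfirst, Fin.append_left, Fin.append_right]
  simpa only [p, finRot_zero] using hout

lemma ne_pathInterior_of_image_eq_compl [Fintype V] [DecidableEq V] {m s : ℕ}
    {c : Fin m → V} {u : Fin s → V}
    (h : Finset.univ.image (pathInterior u) = Finset.univ \ Finset.univ.image c)
    (i : Fin m) (j : Fin (s - 2)) :
    c i ≠ pathInterior u j := by
  intro hij
  have hmem := Finset.mem_image_of_mem (pathInterior u) (Finset.mem_univ j)
  simp [h, ← hij] at hmem

lemma sub_two_eq_of_image_eq_compl [Fintype V] [DecidableEq V] {m s : ℕ}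
    {c : Fin m → V} {u : Fin s → V} (hc : Function.Injective c) (hu : Function.Injective u)
    (h : Finset.univ.image (pathInterior u) = Finset.univ \ Finset.univ.image c) :
    s - 2 = Fintype.card V - m := by
  have hcard := congrArg Finset.card h
  rwa [Finset.card_image_of_injective _ (pathInterior_injective hu), Finset.card_univ_sdiff,
    Finset.card_image_of_injective _ hc, Finset.card_univ, Finset.card_univ, Fintype.card_fin,
    Fintype.card_fin] at hcard

lemma exists_three_bypass {m : ℕ} {c : Fin m → V} (hc : Function.Injective c) (hm : 2 ≤ m)
    (j : Fin m) {w : V} (hw : ∀ i, c i ≠ w) (hin : A (c j) w) (hout : A w (c (finRot j 1))) :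
    ∃ u' : Fin 3 → V, Function.Injective u' ∧ FollowsArcs A u' ∧
      u' ⟨0, by omega⟩ = c j ∧ u' ⟨3 - 1, by omega⟩ = c (finRot j 1) ∧
      ∀ t : Fin 3, 0 < (t : ℕ) → (t : ℕ) < 3 - 1 → ∀ i, u' t ≠ c i := by
  have hne : c j ≠ c (finRot j 1) := hc.ne (finRot_one_ne hm j).symm
  refine ⟨![c j, w, c (finRot j 1)], ?_, ?_, rfl, rfl, ?_⟩
  · intro a b hab
    fin_cases a <;> fin_cases b <;> simp_all [eq_comm]
  · intro a b hab
    fin_cases a <;> fin_cases b <;> simp_all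
  · intro t h0 h1 i
    fin_cases t <;> simp_all [eq_comm]

end

/-- Under the hypotheses of the main theorem, with `C = x₁…x_m x₁`
a longest non-Hamiltonian cycle (so `3 ≤ m ≤ n-3`) and `P = u₁u₂…u_s` a `C`-bypass
with `u₁ = x₁`, `u_s = x₂` (hence of the minimum possible gap, namely gap `1`), of
minimal length among `C`-bypasses of gap `1`, whose internal vertices comprise all of
`R = V(D) - V(C)`: then `s ≥ 5`, `x₁u_{s-1} ∉ A(D)`, `u₂x₂ ∉ A(D)`,
`x_{m-1}u₂, x_m u₂ ∉ A(D)`, and `u_{s-1}x₃, u_{s-1}x₄ ∉ A(D)`. -/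
theorem bypass_properties_gap_one
    [Fintype V] [DecidableEq V] (A : V → V → Prop)
    (n : ℕ) (hn : n = Fintype.card V)
    (hno1 : ¬ ∃ c : Fin (n - 1) → V, IsCycle A c)
    (hno2 : ¬ ∃ c : Fin (n - 2) → V, IsCycle A c)
    (m : ℕ) (hm3 : 3 ≤ m) (hmn : m ≤ n - 3)
    (c : Fin m → V) (hc : IsCycle A c)
    (R : Finset V) (hR : R = Finset.univ \ Finset.image c Finset.univ)
    -- the bypass `P = u₁u₂…u_s` with `u₁ = x₁` and `u_s = x₂` (gap 1):
    (s : ℕ) (hs : 3 ≤ s) (u : Fin s → V)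
    (huinj : Function.Injective u)
    (hupath : ∀ i j : Fin s, (j : ℕ) = (i : ℕ) + 1 → A (u i) (u j))
    (hu1 : u ⟨0, by omega⟩ = c ⟨0, by omega⟩)
    (hus : u ⟨s - 1, by omega⟩ = c (finRot ⟨0, by omega⟩ 1))
    -- the internal vertices of `P` comprise all of `R`:
    (hint : ∀ v : V, v ∈ R ↔ ∃ t : Fin s, 0 < (t : ℕ) ∧ (t : ℕ) < s - 1 ∧ u t = v)
    -- `P` has minimal length among all `C`-bypasses of gap `1`:
    (hmin : ∀ (s' : ℕ) (_ : 3 ≤ s') (u' : Fin s' → V) (j : Fin m),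
      Function.Injective u' →
      (∀ i i' : Fin s', (i' : ℕ) = (i : ℕ) + 1 → A (u' i) (u' i')) →
      u' ⟨0, by omega⟩ = c j →
      u' ⟨s' - 1, by omega⟩ = c (finRot j 1) →
      (∀ t : Fin s', 0 < (t : ℕ) → (t : ℕ) < s' - 1 → ∀ i : Fin m, u' t ≠ c i) →
      s ≤ s') :
    5 ≤ s ∧
    ¬ A (c ⟨0, by omega⟩) (u ⟨s - 2, by omega⟩) ∧
    ¬ A (u ⟨1, by omega⟩) (c (finRot ⟨0, by omega⟩ 1)) ∧
    ¬ A (c (finRot ⟨0, by omega⟩ (m - 2))) (u ⟨1, by omega⟩) ∧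
    ¬ A (c (finRot ⟨0, by omega⟩ (m - 1))) (u ⟨1, by omega⟩) ∧
    ¬ A (u ⟨s - 2, by omega⟩) (c (finRot ⟨0, by omega⟩ 2)) ∧
    ¬ A (u ⟨s - 2, by omega⟩) (c (finRot ⟨0, by omega⟩ 3)) := by
  have hm0 : 0 < m := by omega
  have hRu : Finset.univ.image (pathInterior u) = Finset.univ \ Finset.univ.image c := by
    ext v
    simp only [← hR, hint, Finset.mem_image, Finset.mem_univ, true_and, exists_pathInterior_eq_iff]
  have hoff := ne_pathInterior_of_image_eq_compl hRu
  have hsn : s - 2 = n - m := hn ▸ sub_two_eq_of_image_eq_compl hc.1 huinj hRu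
  have hfirst : A (c ⟨0, hm0⟩) (u ⟨1, by omega⟩) := hu1 ▸ hupath _ _ rfl
  have hlast : A (u ⟨s - 2, by omega⟩) (c (finRot ⟨0, hm0⟩ 1)) :=
    hus ▸ hupath _ _ (by simp only; omega)
  have no_shortcut (w : V) (hw : ∀ i, c i ≠ w) (hin : A (c ⟨0, hm0⟩) w) :
      ¬ A w (c (finRot ⟨0, hm0⟩ 1)) := fun hout => by
    obtain ⟨u', hinj, harcs, h0, h2, hu'⟩ := exists_three_bypass hc.1 (by omega) _ hw hin hout
    have := hmin 3 le_rfl u' ⟨0, hm0⟩ hinj harcs h0 h2 hu'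
    omega
  have no_splice (α : Fin m) (ℓ : ℕ) (hℓ : ℓ = m - 1 ∨ ℓ = m - 2)
      (hin : A (c (finRot α (ℓ - 1))) (u ⟨1, by omega⟩)) :
      ¬ A (u ⟨s - 2, by omega⟩) (c α) := fun hout => by
    have hcyc := hc.exists_isCycle_splice (pathInterior_injective huinj)
      (followsArcs_pathInterior hupath) (by omega) hoff α (by omega) (by omega) hin
      (pathInterior_last u hs ▸ hout)
    rcases hℓ with rfl | rfl
    · exact hno1 ((by omega : m - 1 + (s - 2) = n - 1) ▸ hcyc)
    · exact hno2 ((by omega : m - 2 + (s - 2) = n - 2) ▸ hcyc)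
  refine ⟨by omega, fun h => no_shortcut _ (hoff · ⟨s - 3, by omega⟩)
      (pathInterior_last u hs ▸ h) (pathInterior_last u hs ▸ hlast),
    no_shortcut _ (hoff · ⟨0, by omega⟩) hfirst,
    fun h => no_splice _ (m - 2) (.inr rfl) ?_ hlast,
    fun h => no_splice _ (m - 1) (.inl rfl) ?_ hlast,
    no_splice _ (m - 1) (.inl rfl) ?_, no_splice _ (m - 2) (.inr rfl) ?_⟩
  · rwa [finRot_finRot, show 1 + (m - 2 - 1) = m - 2 by omega]
  · rwa [finRot_finRot, show 1 + (m - 1 - 1) = m - 1 by omega]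
  · rwa [finRot_finRot, show 2 + (m - 1 - 1) = m by omega, finRot_self]
  · rwa [finRot_finRot, show 3 + (m - 2 - 1) = m by omega, finRot_self]
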